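/- Let r ≥ 1 be a natural number and let d ∈ ℚ. Let p', q' : Fin r → ℚ be nondecreasing tuples (slope tuples of convex polygons) with ∑_i p' i = ∑_i q' i = d, and assume that neither p' nor q' is constant. Let p = q : Fin r → ℚ be the constant tuple with value d / r. Then p ≥ p' and q ≥ q' in the Bruhat order, but p ⊕ q ≥ p' ⊕ q' fails in the Bruhat order. -/
import Mathlib


open Finset

/-- Partial sum of the first `j` slopes of a rationally tuplar polygon. -/
def psum {n : ℕ} (s : Fin n → ℚ) (j : ℕ) : ℚ :=
  ∑ i : Fin n, if (i : ℕ) < j then s i else 0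

/-- Bruhat order: `s ≥ t`, i.e. all partial sums of `s` dominate those of `t`,
with equality of total sums. -/
def BruhatGE {n : ℕ} (s t : Fin n → ℚ) : Prop :=
  (∀ j : ℕ, 1 ≤ j → j ≤ n → psum t j ≤ psum s j) ∧ (∑ i, t i) = (∑ i, s i)

/-- `splus` is the concave rearrangement of `s`: a nonincreasing rearrangement. -/
def IsConcaveRearr {n : ℕ} (s splus : Fin n → ℚ) : Prop :=
  (∃ σ : Equiv.Perm (Fin n), splus = s ∘ σ) ∧ Antitone splus

/-- `u` is the direct sum `s ⊕ t`: the concave rearrangement of the concatenation. -/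
def IsDSum {m n : ℕ} (s : Fin m → ℚ) (t : Fin n → ℚ) (u : Fin (m + n) → ℚ) : Prop :=
  IsConcaveRearr (Fin.append s t) u

lemma card_filter_lt' {r j : ℕ} (hj : j ≤ r) :
    ((univ : Finset (Fin r)).filter (fun i : Fin r => (i:ℕ) < j)).card = j := by
  have : (univ : Finset (Fin r)).filter (fun i : Fin r => (i:ℕ) < j)
      = Finset.map (Fin.castLEEmb hj) univ := by
    ext i
    simp only [mem_filter, mem_univ, true_and, Finset.mem_map, Fin.castLEEmb]
    constructor
    · intro h; exact ⟨⟨i, h⟩, by simp [Fin.castLE]⟩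
    · rintro ⟨k, -, rfl⟩; exact k.isLt
  rw [this]; simp

lemma psum_filter {n : ℕ} (s : Fin n → ℚ) (j : ℕ) :
    psum s j = ∑ i ∈ (univ : Finset (Fin n)).filter (fun i : Fin n => (i:ℕ) < j), s i := by
  rw [psum, Finset.sum_filter]

lemma psum_const {r j : ℕ} (hj : j ≤ r) (c : ℚ) :
    psum (fun _ : Fin r => c) j = j * c := by
  rw [psum_filter, Finset.sum_const, card_filter_lt' hj, nsmul_eq_mul]

lemma psum_one {n : ℕ} (hn : 1 ≤ n) (s : Fin n → ℚ) : psum s 1 = s ⟨0, hn⟩ := by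
  rw [psum, Finset.sum_eq_single_of_mem ⟨0, hn⟩ (mem_univ _)]
  · simp
  · intro b _ hb
    have hblt : ¬ (b : ℕ) < 1 := by
      intro h; exact hb (Fin.ext (Nat.lt_one_iff.mp h))
    simp [hblt]

lemma chebyshev {r j : ℕ} {s : Fin r → ℚ} (hs : Monotone s) (hj : j ≤ r) :
    (r : ℚ) * psum s j ≤ (j : ℚ) * ∑ i, s i := by
  set A := (univ : Finset (Fin r)).filter (fun i : Fin r => (i:ℕ) < j) with hA
  set B := (univ : Finset (Fin r)).filter (fun i : Fin r => ¬ (i:ℕ) < j) with hB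
  have hAcard : A.card = j := card_filter_lt' hj
  have hcards : A.card + B.card = r := by
    rw [hA, hB, Finset.card_filter_add_card_filter_not]
    simp
  have hsplit : (∑ i, s i) = (∑ i ∈ A, s i) + (∑ i ∈ B, s i) := by
    rw [hA, hB, Finset.sum_filter_add_sum_filter_not]
  have key : (B.card : ℚ) * ∑ i ∈ A, s i ≤ (A.card : ℚ) * ∑ i ∈ B, s i := by
    have h1 : ∑ a ∈ A, ∑ b ∈ B, s a ≤ ∑ a ∈ A, ∑ b ∈ B, s b := by
      apply Finset.sum_le_sum
      intro a ha
      apply Finset.sum_le_sum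
      intro b hb
      apply hs
      have ha' : (a:ℕ) < j := by simpa [hA] using ha
      have hb' : ¬ (b:ℕ) < j := by simpa [hB] using hb
      exact Fin.le_def.mpr (le_of_lt (lt_of_lt_of_le ha' (le_of_not_gt hb')))
    calc (B.card : ℚ) * ∑ i ∈ A, s i = ∑ a ∈ A, ∑ b ∈ B, s a := by
          rw [Finset.mul_sum]
          exact Finset.sum_congr rfl fun a _ => by rw [Finset.sum_const, nsmul_eq_mul]
      _ ≤ ∑ a ∈ A, ∑ b ∈ B, s b := h1
      _ = (A.card : ℚ) * ∑ i ∈ B, s i := by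
          rw [Finset.sum_const, nsmul_eq_mul]
  rw [psum_filter, hsplit, ← hA]
  have hr' : (r : ℚ) = (A.card : ℚ) + (B.card : ℚ) := by
    push_cast [← hcards]; ring
  have hAq : ((A.card : ℕ) : ℚ) = (j : ℚ) := by rw [hAcard]
  rw [hr', hAq]
  rw [hAq] at key
  nlinarith [key]

/-- Counterexample: direct sums do not preserve the Bruhat order without the
concavity assumption. -/
theorem dsum_not_mono_without_concavity {r : ℕ} (hr : 1 ≤ r) (d : ℚ)
    (p' q' : Fin r → ℚ) (hp' : Monotone p') (hq' : Monotone q')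
    (hp'd : (∑ i, p' i) = d) (hq'd : (∑ i, q' i) = d)
    (hp'nc : ∃ i j, p' i ≠ p' j) (hq'nc : ∃ i j, q' i ≠ q' j)
    (p : Fin r → ℚ) (hp : ∀ i, p i = d / r) :
    BruhatGE p p' ∧ BruhatGE p q' ∧
      ∀ u v : Fin (r + r) → ℚ, IsDSum p p u → IsDSum p' q' v → ¬ BruhatGE u v := by
  have hrpos : (0:ℚ) < r := by exact_mod_cast hr
  have hr0 : (r:ℚ) ≠ 0 := ne_of_gt hrpos
  have hpfun : p = fun _ : Fin r => d / r := funext hp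
  have hpsum : (∑ i, p i) = d := by
    rw [hpfun, Finset.sum_const, Finset.card_univ, Fintype.card_fin, nsmul_eq_mul,
      mul_div_cancel₀ _ hr0]
  have hbr : ∀ s : Fin r → ℚ, Monotone s → (∑ i, s i) = d → BruhatGE p s := by
    intro s hs hsd
    constructor
    · intro j _ hjr
      have hc := chebyshev hs hjr
      rw [hsd] at hc
      have hppj : psum p j = (j:ℚ) * (d / r) := by rw [hpfun, psum_const hjr]
      rw [hppj, ← mul_div_assoc, le_div_iff₀ hrpos]
      linarith
    · rw [hsd, hpsum]
  refine ⟨hbr p' hp' hp'd, hbr q' hq' hq'd, ?_⟩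
  intro u v hu hv hbv
  obtain ⟨⟨σ, hσ⟩, _⟩ := hu
  obtain ⟨⟨τ, hτ⟩, hanti⟩ := hv
  -- u is constant d / r
  have hu_const : ∀ k, u k = d / r := by
    intro k
    rw [hσ]
    simp only [Function.comp_apply]
    refine Fin.addCases ?_ ?_ (σ k) <;> intro i <;>
      simp [Fin.append, Fin.addCases, hp]
  -- there is a value of p' exceeding the average
  have hbig : ∃ i, d / r < p' i := by
    by_contra h
    push_neg at h
    obtain ⟨i, j, hij⟩ := hp'nc
    have hex : ∃ i0 : Fin r, p' i0 < d / r := by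
      rcases lt_or_gt_of_ne hij with h' | h'
      · exact ⟨i, lt_of_lt_of_le h' (h j)⟩
      · exact ⟨j, lt_of_lt_of_le h' (h i)⟩
    obtain ⟨i0, hi0⟩ := hex
    have hlt : (∑ i, p' i) < ∑ _i : Fin r, d / r :=
      Finset.sum_lt_sum (fun i _ => h i) ⟨i0, mem_univ _, hi0⟩
    rw [hp'd, Finset.sum_const, Finset.card_univ, Fintype.card_fin, nsmul_eq_mul,
      mul_div_cancel₀ _ hr0] at hlt
    exact lt_irrefl d hlt
  obtain ⟨i, hi⟩ := hbig
  have hrr : 1 ≤ r + r := by omega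
  -- v 0 is at least p' i > d / r
  have hvval : v (τ.symm (Fin.castAdd r i)) = p' i := by
    rw [hτ]
    simp [Fin.append_left]
  have hv0 : d / r < v ⟨0, hrr⟩ := by
    have hle : v (τ.symm (Fin.castAdd r i)) ≤ v ⟨0, hrr⟩ :=
      hanti (Fin.le_def.mpr (Nat.zero_le _))
    rw [hvval] at hle
    linarith
  have h1 := hbv.1 1 le_rfl hrr
  rw [psum_one hrr u, psum_one hrr v, hu_const] at h1
  linarith
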